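/- arXiv:2504.19527 — 2 statements merged into one kernel-verified Lean document; each statement's English description precedes it below -/
import Mathlib

section
/- Inverse probability weighting identity (Eq. (2)). Fix a ∈ {0,1}. Assume consistency, that (S₁(a), S₂(a), Y(a)) ⫫ A | σ(X), and that R₃ ⫫ Y | σ(X, A, S₁, S₂). Let e_a : 𝒳 → ℝ be measurable with e_a(X) a version of P(A=a | σ(X)) and e_a(X) > 0 P-a.s., and let r₃ be a σ(X, A, S₁, S₂)-measurable random variable that is a version of P(R₃=1 | σ(X, A, S₁, S₂)) with r₃ > 0 P-a.s. Assume the random variable 𝟙{A=a} · R₃ · Y / (e_a(X) · r₃) is P-integrable. Then E[ 𝟙{A=a} · R₃ · Y / (e_a(X) · r₃) | σ(X) ] = E[ Y(a) | σ(X) ] P-almost surely. -/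
open MeasureTheory ProbabilityTheory

/-!
Two rounds of the tower property. Conditioning on `σ(X, A, S₁, S₂, Y)`, sequential missingness
gives `P(R₃ = 1 | ·) = r₃`, so the weight `R₃ / r₃` averages out and, by consistency on `{A = a}`,
leaves `𝟙{A=a} · Y(a) / e_a(X)`. Conditioning that on `σ(X, S₁(a), S₂(a), Y(a))`, unconfoundedness
gives `P(A = a | ·) = e_a(X)`, which leaves `Y(a)`. Both reductions rest on the fact that when
`𝓜₁ ⫫ 𝓜₂ | 𝓜'`, an event of `𝓜₁` has the same conditional probability given `𝓜' ⊔ 𝓜₂` as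
given `𝓜'`.
-/

namespace MeasurableSpace

variable {Ω : Type*}

theorem sup_eq_generateFrom_image2_inter (m₁ m₂ : MeasurableSpace Ω) :
    m₁ ⊔ m₂ = generateFrom
      (Set.image2 (· ∩ ·) {s | MeasurableSet[m₁] s} {s | MeasurableSet[m₂] s}) := by
  refine le_antisymm (sup_le ?_ ?_) (generateFrom_le ?_)
  · exact fun s hs ↦ measurableSet_generateFrom ⟨s, hs, Set.univ, .univ, Set.inter_univ s⟩
  · exact fun s hs ↦ measurableSet_generateFrom ⟨Set.univ, .univ, s, hs, Set.univ_inter s⟩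
  · rintro _ ⟨s₁, hs₁, s₂, hs₂, rfl⟩
    exact (le_sup_left (b := m₂) s₁ hs₁).inter (le_sup_right (a := m₁) s₂ hs₂)

theorem isPiSystem_image2_inter (m₁ m₂ : MeasurableSpace Ω) :
    IsPiSystem (Set.image2 (· ∩ ·) {s | MeasurableSet[m₁] s} {s | MeasurableSet[m₂] s}) := by
  rintro _ ⟨s₁, hs₁, s₂, hs₂, rfl⟩ _ ⟨t₁, ht₁, t₂, ht₂, rfl⟩ -
  exact ⟨s₁ ∩ t₁, hs₁.inter ht₁, s₂ ∩ t₂, hs₂.inter ht₂, Set.inter_inter_inter_comm s₁ t₁ s₂ t₂⟩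

end MeasurableSpace

namespace MeasureTheory

variable {Ω E : Type*} [NormedAddCommGroup E] [NormedSpace ℝ E]
  {m mΩ : MeasurableSpace Ω} {μ : Measure Ω}

theorem setIntegral_eq_of_isPiSystem (hm : m ≤ mΩ) {C : Set (Set Ω)}
    (hmC : m = MeasurableSpace.generateFrom C) (hC : IsPiSystem C) {f g : Ω → E}
    (hf : Integrable f μ) (hg : Integrable g μ) (h_univ : ∫ ω, f ω ∂μ = ∫ ω, g ω ∂μ)
    (h_basic : ∀ s ∈ C, ∫ ω in s, f ω ∂μ = ∫ ω in s, g ω ∂μ) {s : Set Ω}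
    (hs : MeasurableSet[m] s) : ∫ ω in s, f ω ∂μ = ∫ ω in s, g ω ∂μ := by
  induction s, hs using MeasurableSpace.induction_on_inter hmC hC with
  | empty => simp
  | basic s hs => exact h_basic s hs
  | compl s hs ih =>
    rw [setIntegral_compl (hm s hs) hf, setIntegral_compl (hm s hs) hg, ih, h_univ]
  | iUnion s hdisj hs ih =>
    rw [integral_iUnion (fun i ↦ hm _ (hs i)) hdisj hf.integrableOn,
      integral_iUnion (fun i ↦ hm _ (hs i)) hdisj hg.integrableOn]
    exact tsum_congr ih

theorem condExp_ae_eq_condExp_of_le [CompleteSpace E] {m' : MeasurableSpace Ω} (hm : m ≤ m')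
    (hm' : m' ≤ mΩ) [SigmaFinite (μ.trim hm')] {f g : Ω → E} (h : μ[f | m'] =ᵐ[μ] g) :
    μ[f | m] =ᵐ[μ] μ[g | m] :=
  (condExp_condExp_of_le hm hm').symm.trans (condExp_congr_ae h)

end MeasureTheory

namespace ProbabilityTheory

variable {Ω : Type*} {m mΩ : MeasurableSpace Ω} {μ : Measure Ω} [IsFiniteMeasure μ]

theorem condExp_mul_indicator_div_ae_eq {t : Set Ω} (ht : MeasurableSet t) {g q : Ω → ℝ}
    (hg : StronglyMeasurable[m] g) (hq : StronglyMeasurable[m] q) (hq_ver : q =ᵐ[μ] μ⟦t | m⟧)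
    (hq_ne : ∀ᵐ ω ∂μ, q ω ≠ 0)
    (hint : Integrable (fun ω ↦ g ω * t.indicator (fun _ ↦ (1 : ℝ)) ω / q ω) μ) :
    μ[fun ω ↦ g ω * t.indicator (fun _ ↦ (1 : ℝ)) ω / q ω | m] =ᵐ[μ] g := by
  have hfun : (fun ω ↦ g ω * t.indicator (fun _ ↦ (1 : ℝ)) ω / q ω)
      = (g / q) * t.indicator (fun _ ↦ 1) := by
    ext ω
    simp only [Pi.mul_apply, Pi.div_apply]
    ring
  rw [hfun] at hint ⊢
  filter_upwards [condExp_mul_of_stronglyMeasurable_left (hg.div hq) hint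
    ((integrable_const 1).indicator ht), hq_ver, hq_ne] with ω h_pull h_ver h_ne
  rw [h_pull, Pi.mul_apply, ← h_ver, Pi.div_apply, div_mul_cancel₀ _ h_ne]

variable [StandardBorelSpace Ω] {m' m₁ m₂ : MeasurableSpace Ω} {hm' : m' ≤ mΩ}

theorem CondIndep.condExp_indicator_sup_ae_eq (hm₁ : m₁ ≤ mΩ) (hm₂ : m₂ ≤ mΩ)
    (hCI : CondIndep m' m₁ m₂ hm' μ)
    {t : Set Ω} (ht : MeasurableSet[m₁] t) : μ⟦t | m' ⊔ m₂⟧ =ᵐ[μ] μ⟦t | m'⟧ := by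
  have h_mul := (condIndep_iff m' m₁ m₂ hm' hm₁ hm₂ μ).mp hCI
  have ht_int : Integrable (t.indicator fun _ ↦ (1 : ℝ)) μ :=
    (integrable_const 1).indicator (hm₁ t ht)
  have h_inter : ∀ {f : Ω → ℝ}, Integrable f μ → ∀ {s₁ s₂ : Set Ω}, MeasurableSet[m'] s₁ →
      MeasurableSet[m₂] s₂ → ∫ ω in s₁ ∩ s₂, f ω ∂μ = ∫ ω in s₁, μ[s₂.indicator f | m'] ω ∂μ := by
    intro f hf s₁ s₂ hs₁ hs₂
    rw [setIntegral_condExp hm' (hf.indicator (hm₂ s₂ hs₂)) hs₁,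
      setIntegral_indicator (hm₂ s₂ hs₂)]
  refine (ae_eq_condExp_of_forall_setIntegral_eq (sup_le hm' hm₂) ht_int
    (fun s _ _ ↦ integrable_condExp.integrableOn) (fun s hs _ ↦ ?_)
    (stronglyMeasurable_condExp.mono le_sup_left).aestronglyMeasurable).symm
  refine setIntegral_eq_of_isPiSystem (sup_le hm' hm₂)
    (MeasurableSpace.sup_eq_generateFrom_image2_inter m' m₂)
    (MeasurableSpace.isPiSystem_image2_inter m' m₂) integrable_condExp ht_int
    (integral_condExp hm') ?_ hs
  rintro _ ⟨s₁, hs₁, s₂, hs₂, rfl⟩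
  rw [h_inter integrable_condExp hs₁ hs₂, h_inter ht_int hs₁ hs₂]
  have h_ind : s₂.indicator (μ⟦t | m'⟧) = μ⟦t | m'⟧ * s₂.indicator fun _ ↦ 1 := by
    ext ω
    by_cases hω : ω ∈ s₂ <;> simp [hω]
  have h_int : Integrable (μ⟦t | m'⟧ * s₂.indicator fun _ ↦ 1) μ :=
    h_ind ▸ integrable_condExp.indicator (hm₂ s₂ hs₂)
  have key :
      μ[s₂.indicator (μ⟦t | m'⟧) | m'] =ᵐ[μ] μ[s₂.indicator (t.indicator fun _ ↦ 1) | m'] :=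
    calc μ[s₂.indicator (μ⟦t | m'⟧) | m']
      _ = μ[μ⟦t | m'⟧ * s₂.indicator fun _ ↦ 1 | m'] := by rw [h_ind]
      _ =ᵐ[μ] μ⟦t | m'⟧ * μ⟦s₂ | m'⟧ := condExp_mul_of_stronglyMeasurable_left
          stronglyMeasurable_condExp h_int ((integrable_const 1).indicator (hm₂ s₂ hs₂))
      _ =ᵐ[μ] μ⟦t ∩ s₂ | m'⟧ := (h_mul t s₂ ht hs₂).symm
      _ = μ[s₂.indicator (t.indicator fun _ ↦ 1) | m'] := by
          rw [Set.indicator_indicator, Set.inter_comm]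
  exact setIntegral_congr_ae (hm' s₁ hs₁) (key.mono fun ω h _ ↦ h)

theorem CondIndep.condExp_mul_indicator_div_ae_eq (hm₁ : m₁ ≤ mΩ) (hm₂ : m₂ ≤ mΩ)
    (hCI : CondIndep m' m₁ m₂ hm' μ) {t : Set Ω} (ht : MeasurableSet[m₁] t) {g q : Ω → ℝ}
    (hg : StronglyMeasurable[m' ⊔ m₂] g) (hq : StronglyMeasurable[m'] q)
    (hq_ver : q =ᵐ[μ] μ⟦t | m'⟧) (hq_ne : ∀ᵐ ω ∂μ, q ω ≠ 0)
    (hint : Integrable (fun ω ↦ g ω * t.indicator (fun _ ↦ (1 : ℝ)) ω / q ω) μ) :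
    μ[fun ω ↦ g ω * t.indicator (fun _ ↦ (1 : ℝ)) ω / q ω | m' ⊔ m₂] =ᵐ[μ] g :=
  ProbabilityTheory.condExp_mul_indicator_div_ae_eq (hm₁ t ht) hg (hq.mono le_sup_left)
    (hq_ver.trans (hCI.condExp_indicator_sup_ae_eq hm₁ hm₂ ht).symm) hq_ne hint

end ProbabilityTheory

theorem stmt3_general
    {Ω 𝓧 : Type*} [mΩ : MeasurableSpace Ω] [StandardBorelSpace Ω]
    [m𝓧 : MeasurableSpace 𝓧]
    (P : Measure Ω) [IsProbabilityMeasure P]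
    (X : Ω → 𝓧) (hX : Measurable X)
    (A : Ω → Bool) (hA : Measurable A)
    (S₁ S₂ Y : Bool → Ω → ℝ)
    (hS₁ : ∀ a, Measurable (S₁ a)) (hS₂ : ∀ a, Measurable (S₂ a))
    (hYmeas : ∀ a, Measurable (Y a))
    (S₁o S₂o Yo : Ω → ℝ)
    (hS₁o : Measurable S₁o) (hS₂o : Measurable S₂o) (hYo : Measurable Yo)
    (hconsY : Yo = fun ω => Y (A ω) ω)
    (R₃ : Ω → Bool) (hR₃ : Measurable R₃)
    -- fixed arm
    (a : Bool)
    -- unconfoundedness for arm a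
    (hunconf : CondIndep (MeasurableSpace.comap X m𝓧)
      (MeasurableSpace.comap (fun ω => (S₁ a ω, S₂ a ω, Y a ω)) inferInstance)
      (MeasurableSpace.comap A inferInstance) hX.comap_le P)
    -- sequential missingness of the long-term outcome
    (hseq3 : CondIndep
      (MeasurableSpace.comap X m𝓧 ⊔ MeasurableSpace.comap A inferInstance
        ⊔ MeasurableSpace.comap S₁o inferInstance ⊔ MeasurableSpace.comap S₂o inferInstance)
      (MeasurableSpace.comap R₃ inferInstance) (MeasurableSpace.comap Yo inferInstance)
      (sup_le (sup_le (sup_le hX.comap_le hA.comap_le) hS₁o.comap_le) hS₂o.comap_le) P)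
    -- propensity score
    (e : 𝓧 → ℝ) (he : Measurable e)
    (heVer : (fun ω => e (X ω)) =ᵐ[P]
      P[({ω | A ω = a}).indicator (fun _ => (1 : ℝ)) | MeasurableSpace.comap X m𝓧])
    (hePos : ∀ᵐ ω ∂P, 0 < e (X ω))
    -- selection score
    (r₃ : Ω → ℝ)
    (hr₃Meas : Measurable[MeasurableSpace.comap X m𝓧 ⊔ MeasurableSpace.comap A inferInstance
      ⊔ MeasurableSpace.comap S₁o inferInstance ⊔ MeasurableSpace.comap S₂o inferInstance] r₃)
    (hr₃Ver : r₃ =ᵐ[P] P[({ω | R₃ ω = true}).indicator (fun _ => (1 : ℝ)) |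
      MeasurableSpace.comap X m𝓧 ⊔ MeasurableSpace.comap A inferInstance
        ⊔ MeasurableSpace.comap S₁o inferInstance ⊔ MeasurableSpace.comap S₂o inferInstance])
    (hr₃Pos : ∀ᵐ ω ∂P, 0 < r₃ ω)
    -- integrability of the weighted outcome
    (hWint : Integrable (fun ω => ({ω' | A ω' = a}).indicator (fun _ => (1 : ℝ)) ω
      * ({ω' | R₃ ω' = true}).indicator (fun _ => (1 : ℝ)) ω * Yo ω / (e (X ω) * r₃ ω)) P) :
    P[fun ω => ({ω' | A ω' = a}).indicator (fun _ => (1 : ℝ)) ω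
        * ({ω' | R₃ ω' = true}).indicator (fun _ => (1 : ℝ)) ω * Yo ω / (e (X ω) * r₃ ω) |
      MeasurableSpace.comap X m𝓧]
      =ᵐ[P] P[Y a | MeasurableSpace.comap X m𝓧] := by
  have hT : Measurable fun ω ↦ (S₁ a ω, S₂ a ω, Y a ω) :=
    (hS₁ a).prodMk ((hS₂ a).prodMk (hYmeas a))
  set 𝒢 := MeasurableSpace.comap X m𝓧
  set mA : MeasurableSpace Ω := MeasurableSpace.comap A inferInstance
  set ℋ :=
    𝒢 ⊔ mA ⊔ MeasurableSpace.comap S₁o inferInstance ⊔ MeasurableSpace.comap S₂o inferInstance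
  set mY : MeasurableSpace Ω := MeasurableSpace.comap Yo inferInstance
  set mT : MeasurableSpace Ω :=
    MeasurableSpace.comap (fun ω ↦ (S₁ a ω, S₂ a ω, Y a ω)) inferInstance
  set IA := ({ω | A ω = a}).indicator fun _ ↦ (1 : ℝ)
  set IR := ({ω | R₃ ω = true}).indicator fun _ ↦ (1 : ℝ)
  have he𝒢 : Measurable[𝒢] fun ω ↦ e (X ω) := he.comp (comap_measurable X)
  have hIA : Measurable[mA] IA := measurable_const.indicator ⟨{a}, trivial, rfl⟩
  have h𝒢ℋ : 𝒢 ≤ ℋ ⊔ mY := le_sup_left.trans (le_sup_left.trans (le_sup_left.trans le_sup_left))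
  have hAℋ : mA ≤ ℋ ⊔ mY := le_sup_right.trans (le_sup_left.trans (le_sup_left.trans le_sup_left))
  have h_miss : P[fun ω ↦ IA ω * IR ω * Yo ω / (e (X ω) * r₃ ω) | ℋ ⊔ mY]
      =ᵐ[P] fun ω ↦ IA ω * Yo ω / e (X ω) := by
    have h_eq : (fun ω ↦ IA ω * IR ω * Yo ω / (e (X ω) * r₃ ω))
        = fun ω ↦ IA ω * Yo ω / e (X ω) * IR ω / r₃ ω := by
      ext ω
      ring
    have hg : Measurable[ℋ ⊔ mY] fun ω ↦ IA ω * Yo ω / e (X ω) :=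
      ((hIA.mono hAℋ le_rfl).mul ((comap_measurable Yo).mono le_sup_right le_rfl)).div
        (he𝒢.mono h𝒢ℋ le_rfl)
    rw [h_eq] at hWint ⊢
    exact hseq3.condExp_mul_indicator_div_ae_eq hR₃.comap_le hYo.comap_le ⟨{true}, trivial, rfl⟩
      hg.stronglyMeasurable hr₃Meas.stronglyMeasurable hr₃Ver (hr₃Pos.mono fun ω h ↦ h.ne') hWint
  have h_cons : (fun ω ↦ IA ω * Yo ω / e (X ω)) = fun ω ↦ Y a ω * IA ω / e (X ω) := by
    ext ω
    by_cases hAa : A ω = a <;> simp [IA, hAa, hconsY]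
  rw [h_cons] at h_miss
  have hYT : Measurable[mT] (Y a) := measurable_snd.snd.comp (comap_measurable _)
  have h_unconf : P[fun ω ↦ Y a ω * IA ω / e (X ω) | 𝒢 ⊔ mT] =ᵐ[P] Y a :=
    hunconf.symm.condExp_mul_indicator_div_ae_eq hA.comap_le hT.comap_le ⟨{a}, trivial, rfl⟩
      (hYT.mono (le_sup_right : mT ≤ 𝒢 ⊔ mT) le_rfl).stronglyMeasurable he𝒢.stronglyMeasurable heVer
      (hePos.mono fun ω h ↦ h.ne') (integrable_condExp.congr h_miss)
  have hℋ : ℋ ≤ mΩ :=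
    sup_le (sup_le (sup_le hX.comap_le hA.comap_le) hS₁o.comap_le) hS₂o.comap_le
  exact (condExp_ae_eq_condExp_of_le h𝒢ℋ (sup_le hℋ hYo.comap_le) h_miss).trans
    (condExp_ae_eq_condExp_of_le le_sup_left (sup_le hX.comap_le hT.comap_le) h_unconf)

/-- **Inverse probability weighting identity (Eq. (2)).** Under consistency,
unconfoundedness `(S₁(a), S₂(a), Y(a)) ⫫ A | σ(X)` and sequential missingness
`R₃ ⫫ Y | σ(X, A, S₁, S₂)`, with a.s. positive propensity score `e_a(X)` and selection
score `r₃`, we have `E[𝟙{A=a}·R₃·Y/(e_a(X)·r₃) | σ(X)] = E[Y(a) | σ(X)]` `P`-a.s. -/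
theorem stmt3
    {Ω 𝓧 : Type*} [mΩ : MeasurableSpace Ω] [StandardBorelSpace Ω] [Nonempty Ω]
    [m𝓧 : MeasurableSpace 𝓧] [StandardBorelSpace 𝓧]
    (P : Measure Ω) [IsProbabilityMeasure P]
    (X : Ω → 𝓧) (hX : Measurable X)
    (A : Ω → Bool) (hA : Measurable A)
    (S₁ S₂ Y : Bool → Ω → ℝ)
    (hS₁ : ∀ a, Measurable (S₁ a)) (hS₂ : ∀ a, Measurable (S₂ a))
    (hYmeas : ∀ a, Measurable (Y a)) (hYint : ∀ a, Integrable (Y a) P)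
    (S₁o S₂o Yo : Ω → ℝ)
    (hS₁o : Measurable S₁o) (hS₂o : Measurable S₂o) (hYo : Measurable Yo)
    (hcons₁ : S₁o = fun ω => S₁ (A ω) ω)
    (hcons₂ : S₂o = fun ω => S₂ (A ω) ω)
    (hconsY : Yo = fun ω => Y (A ω) ω)
    (R₃ : Ω → Bool) (hR₃ : Measurable R₃)
    -- fixed arm
    (a : Bool)
    -- unconfoundedness for arm a
    (hunconf : CondIndep (MeasurableSpace.comap X m𝓧)
      (MeasurableSpace.comap (fun ω => (S₁ a ω, S₂ a ω, Y a ω)) inferInstance)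
      (MeasurableSpace.comap A inferInstance) hX.comap_le P)
    -- sequential missingness of the long-term outcome
    (hseq3 : CondIndep
      (MeasurableSpace.comap X m𝓧 ⊔ MeasurableSpace.comap A inferInstance
        ⊔ MeasurableSpace.comap S₁o inferInstance ⊔ MeasurableSpace.comap S₂o inferInstance)
      (MeasurableSpace.comap R₃ inferInstance) (MeasurableSpace.comap Yo inferInstance)
      (sup_le (sup_le (sup_le hX.comap_le hA.comap_le) hS₁o.comap_le) hS₂o.comap_le) P)
    -- propensity score
    (e : 𝓧 → ℝ) (he : Measurable e)
    (heVer : (fun ω => e (X ω)) =ᵐ[P]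
      P[({ω | A ω = a}).indicator (fun _ => (1 : ℝ)) | MeasurableSpace.comap X m𝓧])
    (hePos : ∀ᵐ ω ∂P, 0 < e (X ω))
    -- selection score
    (r₃ : Ω → ℝ)
    (hr₃Meas : Measurable[MeasurableSpace.comap X m𝓧 ⊔ MeasurableSpace.comap A inferInstance
      ⊔ MeasurableSpace.comap S₁o inferInstance ⊔ MeasurableSpace.comap S₂o inferInstance] r₃)
    (hr₃Ver : r₃ =ᵐ[P] P[({ω | R₃ ω = true}).indicator (fun _ => (1 : ℝ)) |
      MeasurableSpace.comap X m𝓧 ⊔ MeasurableSpace.comap A inferInstance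
        ⊔ MeasurableSpace.comap S₁o inferInstance ⊔ MeasurableSpace.comap S₂o inferInstance])
    (hr₃Pos : ∀ᵐ ω ∂P, 0 < r₃ ω)
    -- integrability of the weighted outcome
    (hWint : Integrable (fun ω => ({ω' | A ω' = a}).indicator (fun _ => (1 : ℝ)) ω
      * ({ω' | R₃ ω' = true}).indicator (fun _ => (1 : ℝ)) ω * Yo ω / (e (X ω) * r₃ ω)) P) :
    P[fun ω => ({ω' | A ω' = a}).indicator (fun _ => (1 : ℝ)) ω
        * ({ω' | R₃ ω' = true}).indicator (fun _ => (1 : ℝ)) ω * Yo ω / (e (X ω) * r₃ ω) |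
      MeasurableSpace.comap X m𝓧]
      =ᵐ[P] P[Y a | MeasurableSpace.comap X m𝓧] :=
  stmt3_general (mΩ := mΩ) (m𝓧 := m𝓧) P X hX A hA S₁ S₂ Y hS₁ hS₂ hYmeas S₁o S₂o Yo hS₁o hS₂o hYo
    hconsY R₃ hR₃ a hunconf hseq3 e he heVer hePos r₃ hr₃Meas hr₃Ver hr₃Pos hWint
end

section
/- Two-stage factorization of the second-stage selection score (intermediate step in the proof of Proposition 4.3). Assume R₂ ≤ R₁ pointwise; R₁ ⫫ S₁ | σ(X, A); P(R₁=1) > 0; and that r₁ := P(R₁=1 | σ(X, A)) is P-a.s. strictly positive. Let g₂ be any σ(X, A, S₁)-measurable version of P(R₂=1 | σ(X, A, S₁)) computed under the conditional measure P(·|{R₁=1}), and let g₁ be any version of P(R₁=1 | σ(X, A)) under P. Then P(R₂=1 | σ(X, A, S₁)) = g₂ · g₁ P-almost surely. -/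
/-!
Write `𝒢 = σ(X, A)` and `ℋ = 𝒢 ⊔ σ(S₁)`. Since `{R₂ = 1} ⊆ {R₁ = 1}`, and integrating over
`{R₁ = 1}` against `P` is `P(R₁ = 1)` times integrating against `P(·|R₁ = 1)`, every
`ℋ`-measurable version `g₂` of `P(R₂ = 1 | ℋ)` under `P(·|R₁ = 1)` satisfies
`P(R₂ = 1 | ℋ) = g₂ · P(R₁ = 1 | ℋ)`. The conditional independence `R₁ ⫫ S₁ | 𝒢` makes
`P(R₁ = 1 | 𝒢)` integrate like `𝟙{R₁ = 1}` over the sets `G ∩ T` with `G ∈ 𝒢`, `T ∈ σ(S₁)`,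
which form a π-system generating `ℋ`; hence `P(R₁ = 1 | ℋ) = P(R₁ = 1 | 𝒢) = g₁`.
-/

open MeasureTheory ProbabilityTheory MeasurableSpace Set
open scoped ENNReal

lemma Set.indicator_eq_mul_indicator_one {Ω : Type*} (s : Set Ω) (f : Ω → ℝ) :
    s.indicator f = f * s.indicator fun _ ↦ (1 : ℝ) := by
  ext ω
  by_cases hω : ω ∈ s <;> simp [hω]

lemma IsPiSystem.image2_inter {Ω : Type*} {C D : Set (Set Ω)} (hC : IsPiSystem C)
    (hD : IsPiSystem D) : IsPiSystem (image2 (· ∩ ·) C D) := by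
  rintro _ ⟨G₁, hG₁, T₁, hT₁, rfl⟩ _ ⟨G₂, hG₂, T₂, hT₂, rfl⟩ hne
  rw [inter_inter_inter_comm] at hne ⊢
  exact mem_image2_of_mem (hC G₁ hG₁ G₂ hG₂ hne.left) (hD T₁ hT₁ T₂ hT₂ hne.right)

lemma MeasurableSpace.sup_eq_generateFrom_image2_inter_s7 {Ω : Type*} (m₁ m₂ : MeasurableSpace Ω) :
    m₁ ⊔ m₂ =
      generateFrom (image2 (· ∩ ·) {G | MeasurableSet[m₁] G} {T | MeasurableSet[m₂] T}) := by
  refine le_antisymm (sup_le (fun G hG ↦ ?_) (fun T hT ↦ ?_)) (generateFrom_le ?_)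
  · exact measurableSet_generateFrom ⟨G, hG, univ, .univ, inter_univ G⟩
  · exact measurableSet_generateFrom ⟨univ, .univ, T, hT, univ_inter T⟩
  · rintro _ ⟨G, hG, T, hT, rfl⟩
    exact (le_sup_left (b := m₂) G hG).inter (le_sup_right (a := m₁) T hT)

lemma setIntegral_eq_setIntegral_of_isPiSystem {Ω : Type*} {m mΩ : MeasurableSpace Ω}
    {μ : Measure Ω} {C : Set (Set Ω)} (hm : m ≤ mΩ) (h_eq : m = generateFrom C)
    (h_inter : IsPiSystem C) {f g : Ω → ℝ} (hf : Integrable f μ) (hg : Integrable g μ)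
    (basic : ∀ t ∈ C, ∫ x in t, f x ∂μ = ∫ x in t, g x ∂μ)
    (h_univ : ∫ x, f x ∂μ = ∫ x, g x ∂μ) :
    ∀ t, MeasurableSet[m] t → ∫ x in t, f x ∂μ = ∫ x in t, g x ∂μ := by
  intro t ht
  induction t, ht using induction_on_inter h_eq h_inter with
  | empty => simp
  | basic t ht => exact basic t ht
  | compl t ht iht =>
    rw [setIntegral_compl (hm t ht) hf, setIntegral_compl (hm t ht) hg, iht, h_univ]
  | iUnion t hdisj ht iht =>
    rw [integral_iUnion (fun i ↦ hm _ (ht i)) hdisj hf.integrableOn,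
      integral_iUnion (fun i ↦ hm _ (ht i)) hdisj hg.integrableOn]
    exact tsum_congr iht

section CondIndep

variable {Ω : Type*} {m' m₁ m₂ : MeasurableSpace Ω} [mΩ : MeasurableSpace Ω]
  [StandardBorelSpace Ω] {μ : Measure Ω} [IsFiniteMeasure μ]

lemma ProbabilityTheory.condExp_indicator_sup_ae_eq_of_condIndep (hm' : m' ≤ mΩ)
    (hm₁ : m₁ ≤ mΩ) (hm₂ : m₂ ≤ mΩ) (h : CondIndep m' m₁ m₂ hm' μ) {s : Set Ω}
    (hs : MeasurableSet[m₁] s) :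
    μ⟦s | m' ⊔ m₂⟧ =ᵐ[μ] μ⟦s | m'⟧ := by
  have hsup : m' ⊔ m₂ ≤ mΩ := sup_le hm' hm₂
  have hs' : MeasurableSet s := hm₁ s hs
  have hs_int : Integrable (s.indicator fun _ ↦ (1 : ℝ)) μ := (integrable_const 1).indicator hs'
  have h_inter : ∀ G, MeasurableSet[m'] G → ∀ T, MeasurableSet[m₂] T →
      ∫ ω in G ∩ T, (μ⟦s | m'⟧) ω ∂μ = ∫ ω in G ∩ T, s.indicator (fun _ ↦ (1 : ℝ)) ω ∂μ := by
    intro G hG T hT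
    have hfac := (condIndep_iff m' m₁ m₂ hm' hm₁ hm₂ μ).1 h s T hs hT
    replace hT : MeasurableSet T := hm₂ T hT
    have hrT_int : Integrable (μ⟦s | m'⟧ * T.indicator fun _ ↦ (1 : ℝ)) μ := by
      rw [← indicator_eq_mul_indicator_one]
      exact integrable_condExp.indicator hT
    calc ∫ ω in G ∩ T, (μ⟦s | m'⟧) ω ∂μ
        = ∫ ω in G, (μ⟦s | m'⟧ * T.indicator fun _ ↦ (1 : ℝ)) ω ∂μ := by
          rw [← indicator_eq_mul_indicator_one, setIntegral_indicator hT]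
      _ = ∫ ω in G, (μ[μ⟦s | m'⟧ * T.indicator fun _ ↦ (1 : ℝ) | m']) ω ∂μ :=
          (setIntegral_condExp hm' hrT_int hG).symm
      _ = ∫ ω in G, (μ⟦s | m'⟧ * μ⟦T | m'⟧) ω ∂μ :=
          integral_congr_ae (ae_restrict_of_ae (condExp_mul_of_stronglyMeasurable_left
            stronglyMeasurable_condExp hrT_int ((integrable_const 1).indicator hT)))
      _ = ∫ ω in G, (μ⟦s ∩ T | m'⟧) ω ∂μ := integral_congr_ae (ae_restrict_of_ae hfac.symm)
      _ = ∫ ω in G ∩ T, s.indicator (fun _ ↦ (1 : ℝ)) ω ∂μ := by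
          rw [setIntegral_condExp hm' ((integrable_const 1).indicator (hs'.inter hT)) hG,
            setIntegral_indicator (hs'.inter hT), setIntegral_indicator hs',
            inter_comm s T, inter_assoc]
  refine (ae_eq_condExp_of_forall_setIntegral_eq hsup hs_int
    (fun _ _ _ ↦ integrable_condExp.integrableOn) (fun t ht _ ↦ ?_)
    (stronglyMeasurable_condExp.mono (le_sup_left : m' ≤ m' ⊔ m₂)).aestronglyMeasurable).symm
  refine setIntegral_eq_setIntegral_of_isPiSystem hsup (sup_eq_generateFrom_image2_inter_s7 m' m₂)
    (m'.isPiSystem_measurableSet.image2_inter m₂.isPiSystem_measurableSet) integrable_condExp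
    hs_int ?_ (integral_condExp hm') t ht
  rintro _ ⟨G, hG, T, hT, rfl⟩
  exact h_inter G hG T hT

end CondIndep

section Cond

variable {Ω : Type*} {m : MeasurableSpace Ω} [mΩ : MeasurableSpace Ω] {μ : Measure Ω}
  {s : Set Ω} {f g : Ω → ℝ}

lemma ProbabilityTheory.restrict_eq_measure_smul_cond (hμs : μ s ≠ ∞) :
    μ.restrict s = μ s • μ[|s] := by
  rcases eq_or_ne (μ s) 0 with h | h
  · simp [h]
  · rw [cond, smul_smul, ENNReal.mul_inv_cancel h hμs, one_smul]

lemma ProbabilityTheory.setIntegral_cond (hμs : μ s ≠ ∞) {t : Set Ω} (ht : MeasurableSet t) :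
    (μ s).toReal * ∫ x in t, f x ∂μ[|s] = ∫ x in t ∩ s, f x ∂μ := by
  rw [← Measure.restrict_restrict ht, restrict_eq_measure_smul_cond hμs, Measure.restrict_smul,
    integral_smul_measure, smul_eq_mul]

lemma MeasureTheory.Integrable.cond (hf : Integrable f μ) : Integrable f μ[|s] := by
  rcases eq_or_ne (μ s) 0 with h | h
  · simp [cond_eq_zero_of_meas_eq_zero h]
  · exact hf.restrict.smul_measure (ENNReal.inv_ne_top.2 h)

lemma MeasureTheory.IntegrableOn.of_cond (hμs : μ s ≠ ∞) (hf : Integrable f μ[|s]) :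
    IntegrableOn f s μ := by
  rw [IntegrableOn, restrict_eq_measure_smul_cond hμs]
  exact hf.smul_measure hμs

lemma ProbabilityTheory.condExp_indicator_ae_eq_condExp_cond_mul [IsFiniteMeasure μ]
    (hm : m ≤ mΩ) (hs : MeasurableSet s) (hf : Integrable f μ) (hg : StronglyMeasurable[m] g)
    (hgf : g =ᵐ[μ[|s]] μ[|s][f | m]) :
    μ[s.indicator f | m] =ᵐ[μ] g * μ⟦s | m⟧ := by
  have hμs : μ s ≠ ∞ := measure_ne_top μ s
  have hgs : Integrable (s.indicator g) μ :=
    (integrable_indicator_iff hs).2 (.of_cond hμs (integrable_condExp.congr hgf.symm))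
  have hgf' : μ[s.indicator g | m] =ᵐ[μ] μ[s.indicator f | m] := by
    refine ae_eq_condExp_of_forall_setIntegral_eq hm (hf.indicator hs)
      (fun _ _ _ ↦ integrable_condExp.integrableOn) (fun t ht _ ↦ ?_)
      stronglyMeasurable_condExp.aestronglyMeasurable
    rw [setIntegral_condExp hm hgs ht, setIntegral_indicator hs, setIntegral_indicator hs,
      ← setIntegral_cond hμs (hm t ht), ← setIntegral_cond hμs (hm t ht),
      ← setIntegral_condExp hm hf.cond ht, integral_congr_ae (ae_restrict_of_ae hgf)]
  rw [indicator_eq_mul_indicator_one] at hgs hgf'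
  exact hgf'.symm.trans (condExp_mul_of_stronglyMeasurable_left hg hgs
    ((integrable_const 1).indicator hs))

end Cond

theorem stmt7_general
    {Ω 𝓧 : Type*} [mΩ : MeasurableSpace Ω] [StandardBorelSpace Ω]
    [m𝓧 : MeasurableSpace 𝓧]
    (P : Measure Ω) [IsProbabilityMeasure P]
    (X : Ω → 𝓧) (hX : Measurable X)
    (A : Ω → Bool) (hA : Measurable A)
    (S₁ : Ω → ℝ) (hS₁ : Measurable S₁)
    (R₁ R₂ : Ω → Bool) (hR₁ : Measurable R₁) (hR₂ : Measurable R₂)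
    -- monotone missing
    (hmono21 : ∀ ω, R₂ ω = true → R₁ ω = true)
    -- sequential missing of the first-stage outcome
    (hseq1 : CondIndep (MeasurableSpace.comap X m𝓧 ⊔ MeasurableSpace.comap A inferInstance)
      (MeasurableSpace.comap R₁ inferInstance) (MeasurableSpace.comap S₁ inferInstance)
      (sup_le hX.comap_le hA.comap_le) P)
    -- g₂ : σ(X,A,S₁)-measurable version of P(R₂=1 | σ(X,A,S₁)) under P(·|{R₁=1})
    (g₂ : Ω → ℝ)
    (hg₂Meas : Measurable[MeasurableSpace.comap X m𝓧 ⊔ MeasurableSpace.comap A inferInstance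
      ⊔ MeasurableSpace.comap S₁ inferInstance] g₂)
    (hg₂Ver : g₂ =ᵐ[P[|{ω | R₁ ω = true}]]
      (P[|{ω | R₁ ω = true}])[({ω' | R₂ ω' = true}).indicator (fun _ => (1 : ℝ)) |
        MeasurableSpace.comap X m𝓧 ⊔ MeasurableSpace.comap A inferInstance
          ⊔ MeasurableSpace.comap S₁ inferInstance])
    -- g₁ : any version of P(R₁=1 | σ(X,A)) under P
    (g₁ : Ω → ℝ)
    (hg₁Ver : g₁ =ᵐ[P] P[({ω' | R₁ ω' = true}).indicator (fun _ => (1 : ℝ)) |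
      MeasurableSpace.comap X m𝓧 ⊔ MeasurableSpace.comap A inferInstance]) :
    P[({ω' | R₂ ω' = true}).indicator (fun _ => (1 : ℝ)) |
      MeasurableSpace.comap X m𝓧 ⊔ MeasurableSpace.comap A inferInstance
        ⊔ MeasurableSpace.comap S₁ inferInstance]
      =ᵐ[P] fun ω => g₂ ω * g₁ ω := by
  have htower := condExp_indicator_sup_ae_eq_of_condIndep _ hR₁.comap_le hS₁.comap_le hseq1
    (s := {ω | R₁ ω = true}) ⟨{true}, trivial, rfl⟩
  have hsplit := condExp_indicator_ae_eq_condExp_cond_mul (s := {ω | R₁ ω = true})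
    (f := {ω | R₂ ω = true}.indicator fun _ ↦ 1)
    (sup_le (sup_le hX.comap_le hA.comap_le) hS₁.comap_le) (hR₁ (measurableSet_singleton true))
    ((integrable_const 1).indicator (hR₂ (measurableSet_singleton true)))
    hg₂Meas.stronglyMeasurable hg₂Ver
  have hsub : {ω | R₂ ω = true} ⊆ {ω | R₁ ω = true} := fun ω ↦ hmono21 ω
  rw [indicator_indicator, inter_eq_right.2 hsub] at hsplit
  filter_upwards [hsplit, htower, hg₁Ver] with ω h₂ h₁ hg₁
  rw [h₂, Pi.mul_apply, h₁, hg₁]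

/-- **Two-stage factorization of the second-stage selection score** (intermediate step in
the proof of Proposition 4.3). If `R₂ ≤ R₁`, `R₁ ⫫ S₁ | σ(X,A)`, `P(R₁=1) > 0` and
`r₁ = P(R₁=1 | σ(X,A))` is a.s. positive, then `P(R₂=1 | σ(X,A,S₁)) = g₂ · g₁` `P`-a.s.,
where `g₂` is any `σ(X,A,S₁)`-measurable version of `P(R₂=1 | σ(X,A,S₁))` under
`P(·|{R₁=1})` and `g₁` is any version of `P(R₁=1 | σ(X,A))` under `P`. -/
theorem stmt7
    {Ω 𝓧 : Type*} [mΩ : MeasurableSpace Ω] [StandardBorelSpace Ω] [Nonempty Ω]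
    [m𝓧 : MeasurableSpace 𝓧] [StandardBorelSpace 𝓧]
    (P : Measure Ω) [IsProbabilityMeasure P]
    (X : Ω → 𝓧) (hX : Measurable X)
    (A : Ω → Bool) (hA : Measurable A)
    (S₁ : Ω → ℝ) (hS₁ : Measurable S₁)
    (R₁ R₂ : Ω → Bool) (hR₁ : Measurable R₁) (hR₂ : Measurable R₂)
    -- monotone missing
    (hmono21 : ∀ ω, R₂ ω = true → R₁ ω = true)
    -- sequential missing of the first-stage outcome
    (hseq1 : CondIndep (MeasurableSpace.comap X m𝓧 ⊔ MeasurableSpace.comap A inferInstance)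
      (MeasurableSpace.comap R₁ inferInstance) (MeasurableSpace.comap S₁ inferInstance)
      (sup_le hX.comap_le hA.comap_le) P)
    -- positive probability of first-stage observation
    (hR₁pos : 0 < P {ω | R₁ ω = true})
    -- a.s. positivity of the selection score r₁
    (hr₁pos : ∀ᵐ ω ∂P, 0 < (P[({ω' | R₁ ω' = true}).indicator (fun _ => (1 : ℝ)) |
      MeasurableSpace.comap X m𝓧 ⊔ MeasurableSpace.comap A inferInstance]) ω)
    -- g₂ : σ(X,A,S₁)-measurable version of P(R₂=1 | σ(X,A,S₁)) under P(·|{R₁=1})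
    (g₂ : Ω → ℝ)
    (hg₂Meas : Measurable[MeasurableSpace.comap X m𝓧 ⊔ MeasurableSpace.comap A inferInstance
      ⊔ MeasurableSpace.comap S₁ inferInstance] g₂)
    (hg₂Ver : g₂ =ᵐ[P[|{ω | R₁ ω = true}]]
      (P[|{ω | R₁ ω = true}])[({ω' | R₂ ω' = true}).indicator (fun _ => (1 : ℝ)) |
        MeasurableSpace.comap X m𝓧 ⊔ MeasurableSpace.comap A inferInstance
          ⊔ MeasurableSpace.comap S₁ inferInstance])
    -- g₁ : any version of P(R₁=1 | σ(X,A)) under P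
    (g₁ : Ω → ℝ)
    (hg₁Ver : g₁ =ᵐ[P] P[({ω' | R₁ ω' = true}).indicator (fun _ => (1 : ℝ)) |
      MeasurableSpace.comap X m𝓧 ⊔ MeasurableSpace.comap A inferInstance]) :
    P[({ω' | R₂ ω' = true}).indicator (fun _ => (1 : ℝ)) |
      MeasurableSpace.comap X m𝓧 ⊔ MeasurableSpace.comap A inferInstance
        ⊔ MeasurableSpace.comap S₁ inferInstance]
      =ᵐ[P] fun ω => g₂ ω * g₁ ω :=
  stmt7_general (mΩ := mΩ) (m𝓧 := m𝓧) P X hX A hA S₁ hS₁ R₁ R₂ hR₁ hR₂ hmono21 hseq1 g₂ hg₂Meas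
    hg₂Ver g₁ hg₁Ver
end
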